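/- arXiv:math/0503094 — 6 statements merged into one kernel-verified Lean document; each statement's English description precedes it below -/
import Mathlib

section
/- For 1/2 < η < 1, the function G(t,s) defined piecewise by G(t,s) = ts - t²/2 if 0 ≤ s ≤ η and 0 ≤ t ≤ s; G(t,s) = s²/2 if 0 ≤ s ≤ η and s ≤ t ≤ 1; G(t,s) = ηt - t²/2 if η ≤ s ≤ 1 and 0 ≤ t ≤ s; G(t,s) = s²/2 - ts + ηt if η ≤ s ≤ 1 and s ≤ t ≤ 1, satisfies: for each fixed s ∈ [0,1], the maximum of G(t,s) over t ∈ [0,1] equals J(s), where J(s) = s²/2 for 0 ≤ s ≤ η and J(s) = η²/2 for η ≤ s ≤ 1. -/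
open Set

noncomputable def G (η t s : ℝ) : ℝ :=
  if s ≤ η then (if t ≤ s then t * s - t ^ 2 / 2 else s ^ 2 / 2)
  else (if t ≤ s then η * t - t ^ 2 / 2 else s ^ 2 / 2 - t * s + η * t)

noncomputable def J (η s : ℝ) : ℝ := if s ≤ η then s ^ 2 / 2 else η ^ 2 / 2

noncomputable def q (η t : ℝ) : ℝ := if t ≤ η then η * t else 2 * η * t - t ^ 2

theorem stmt_0 (η : ℝ) (hη : 1/2 < η ∧ η < 1) (s : ℝ) (hs : s ∈ Icc (0:ℝ) 1) :
    IsGreatest ((fun t => G η t s) '' Icc (0:ℝ) 1) (J η s) := by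
  obtain ⟨hη1, hη2⟩ := hη
  obtain ⟨hs0, hs1⟩ := hs
  constructor
  · by_cases h : s ≤ η
    · exact ⟨s, ⟨hs0, hs1⟩, by simp [G, J, h]; ring⟩
    · refine ⟨η, ⟨by linarith, by linarith⟩, ?_⟩
      simp only [G, J, if_neg h, if_pos (le_of_not_ge h)]
      ring
  · rintro x ⟨t, ⟨ht0, ht1⟩, rfl⟩
    simp only [G, J]
    by_cases h : s ≤ η <;> simp only [h, if_true, if_false] <;>
      by_cases h2 : t ≤ s <;> simp only [h2, if_true, if_false] <;> nlinarith [sq_nonneg (η - t), sq_nonneg (s - t)]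
end

section
/- For 1/2 < η < 1, the Green's function G(t,s) (defined piecewise as in the context) satisfies G(t,s) ≥ q(t)·J(s) for all t, s ∈ [0,1], where q(t) = ηt for 0 ≤ t ≤ η and q(t) = 2ηt - t² for η ≤ t ≤ 1, and J(s) = s²/2 for 0 ≤ s ≤ η and J(s) = η²/2 for η ≤ s ≤ 1. -/
open Set

theorem stmt_1 (η : ℝ) (hη : 1/2 < η ∧ η < 1) :
    ∀ t ∈ Icc (0:ℝ) 1, ∀ s ∈ Icc (0:ℝ) 1, G η t s ≥ q η t * J η s := by
  obtain ⟨hη1, hη2⟩ := hη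
  rintro t ⟨ht0, ht1⟩ s ⟨hs0, hs1⟩
  unfold G J q
  split_ifs with h1 h2 h3 h3 h2 h3 h3
  · -- s ≤ η, t ≤ s, t ≤ η
    nlinarith [mul_nonneg ht0 (sub_nonneg.2 h2), mul_nonneg (mul_nonneg ht0 hs0) (sub_nonneg.2 hs1), mul_nonneg (mul_nonneg ht0 hs0) (mul_nonneg hs0 (le_of_lt (lt_trans (by norm_num) hη1)))]
  · -- s ≤ η, t ≤ s, t > η : impossible since t ≤ s ≤ η
    exact absurd (h2.trans h1) h3
  · -- s ≤ η, s < t, t ≤ η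
    nlinarith [mul_nonneg hs0 hs0, mul_nonneg (mul_nonneg hs0 hs0) (sub_nonneg.2 (h3.trans hη2.le))]
  · -- s ≤ η, s < t, t > η
    nlinarith [sq_nonneg s, sq_nonneg (η - t), mul_nonneg (mul_nonneg hs0 hs0) (sub_nonneg.2 ht1)]
  · -- s > η, t ≤ s, t ≤ η
    nlinarith [mul_nonneg ht0 (sub_nonneg.2 h3), mul_nonneg (mul_nonneg ht0 (by linarith : (0:ℝ) ≤ η)) (sub_nonneg.2 hη2.le)]
  · -- s > η, t ≤ s, t > η
    nlinarith [mul_nonneg ht0 (mul_nonneg (sub_nonneg.2 hη2.le) (sub_nonneg.2 (show t/2 ≤ η by nlinarith)))]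
  · -- s > η, s < t, t ≤ η : impossible
    push_neg at h1 h2
    exact absurd (h2.le.trans h3) (not_le.2 h1)
  · -- s > η, s < t, t > η
    push_neg at h2
    nlinarith [sq_nonneg (t - s), mul_nonneg ht0 (mul_nonneg (sub_nonneg.2 hη2.le) (sub_nonneg.2 (show t/2 ≤ η by nlinarith))), mul_nonneg (sub_nonneg.2 hη2.le) (sub_nonneg.2 ht1)]
end

section
/- For 1/2 < η < 1 and all t ∈ [0,1], Ψ*(t) ≤ K·q(t), where Ψ*(t) = (1/6)[t³ - 3t² + (6η - 3η²)t], K = max{1, B₀} with B₀ = (6η - 3η² - 2)/(6(2η - 1)), and q(t) = ηt for 0 ≤ t ≤ η, q(t) = 2ηt - t² for η ≤ t ≤ 1. -/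
open Set

theorem stmt_5 (η : ℝ) (hη : 1/2 < η ∧ η < 1)
    (B₀ K : ℝ) (hB₀ : B₀ = (6 * η - 3 * η ^ 2 - 2) / (6 * (2 * η - 1)))
    (hK : K = max 1 B₀) :
    ∀ t ∈ Icc (0:ℝ) 1,
      (1/6) * (t ^ 3 - 3 * t ^ 2 + (6 * η - 3 * η ^ 2) * t) ≤ K * q η t := by
  obtain ⟨hη1, hη2⟩ := hη
  have hK1 : 1 ≤ K := hK ▸ le_max_left _ _
  have hd : (0:ℝ) < 6 * (2 * η - 1) := by linarith
  have hKB : 6 * η - 3 * η ^ 2 - 2 ≤ K * (6 * (2 * η - 1)) := by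
    have hB : B₀ ≤ K := hK ▸ le_max_right _ _
    have := (div_le_iff₀ hd).mp (hB₀ ▸ hB)
    linarith
  intro t ht
  obtain ⟨ht0, ht1⟩ := ht
  unfold q
  by_cases hcase : t ≤ η
  · simp only [if_pos hcase]
    have h1 : (1/6) * (t ^ 3 - 3 * t ^ 2 + (6 * η - 3 * η ^ 2) * t) ≤ η * t := by
      nlinarith [mul_nonneg ht0 (sub_nonneg.mpr ht1), sq_nonneg η, sq_nonneg t,
        mul_nonneg (mul_nonneg ht0 ht0) (sub_nonneg.mpr ht1),
        mul_nonneg ht0 (sq_nonneg η)]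
    have h2 : η * t ≤ K * (η * t) := le_mul_of_one_le_left (by positivity) hK1
    linarith
  · simp only [if_neg hcase]
    push_neg at hcase
    have htη : η ≤ t := le_of_lt hcase
    nlinarith [mul_nonneg (mul_nonneg (sub_nonneg.mpr htη) (sub_nonneg.mpr ht1)) ht0,
      mul_nonneg (sub_nonneg.mpr ht1) (by nlinarith [sq_nonneg η] :
        (0:ℝ) ≤ 6 * K * η ^ 2 + 2 * η ^ 3 - 3 * η ^ 2),
      mul_nonneg (sub_nonneg.mpr htη)
        (by linarith : (0:ℝ) ≤ K * (6 * (2 * η - 1)) - (6 * η - 3 * η ^ 2 - 2)),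
      mul_pos (by linarith : (0:ℝ) < t) (by linarith : (0:ℝ) < t)]
end

section
/- For 1/2 < η < 1 and t ∈ [η,1], the inequality (1/6)[t³ - 3t² + (6η - 3η²)t] ≤ B₀·(2ηt - t²) holds, where B₀ = (6η - 3η² - 2)/(6(2η - 1)). -/
open Set

theorem stmt_7 (η : ℝ) (hη : 1/2 < η ∧ η < 1)
    (B₀ : ℝ) (hB₀ : B₀ = (6 * η - 3 * η ^ 2 - 2) / (6 * (2 * η - 1))) :
    ∀ t ∈ Icc η 1,
      (1/6) * (t ^ 3 - 3 * t ^ 2 + (6 * η - 3 * η ^ 2) * t) ≤ B₀ * (2 * η * t - t ^ 2) := by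
  obtain ⟨h1, h2⟩ := hη
  intro t ht
  obtain ⟨ht1, ht2⟩ := ht
  have hd : (0:ℝ) < 6 * (2 * η - 1) := by linarith
  rw [hB₀, div_mul_eq_mul_div, div_mul_eq_mul_div, div_le_div_iff₀ (by norm_num) hd]
  have ht0 : 0 < t := by linarith
  have hlin : 0 ≤ (2 * η - 1) * t + η * (2 - 3 * η) := by
    nlinarith [mul_nonneg (by linarith : (0:ℝ) ≤ 2 * η - 1) (sub_nonneg.2 ht1)]
  nlinarith [mul_nonneg (mul_nonneg ht0.le (by linarith : (0:ℝ) ≤ 1 - t)) hlin]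
end

section
/- Let g : (0,∞) → [0,∞) be continuous. Then there exists a nondecreasing continuous function h : [0,∞) → [0,∞) such that h(x) > 0 whenever x > 0, and the product x ↦ g(x)h(x) extends to a continuous function on [0,∞) (i.e., the limit of g(x)h(x) as x → 0⁺ exists). -/
/-!
Let `M(t)` be the supremum of `g` on `[t, 1]`; it is finite and nonincreasing for `t ∈ (0, 1]`,
so `φ = 1 / (1 + M⁺)` is positive, nondecreasing and satisfies `g φ ≤ 1` on `(0, 1]`.
Its primitive `h(x) = ∫₀ˣ φ` is continuous, nondecreasing and positive on `(0, ∞)`, and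
`h(x) ≤ x φ(x)` by monotonicity of `φ`, so `0 ≤ g(x) h(x) ≤ x` near `0`.
-/

open Set Filter Topology MeasureTheory intervalIntegral

lemma Monotone.intervalIntegral_le_sub_mul {φ : ℝ → ℝ} (hφ : Monotone φ) {a b : ℝ} (hab : a ≤ b) :
    ∫ t in a..b, φ t ≤ (b - a) * φ b := by
  simpa using integral_mono_on hab hφ.intervalIntegrable (intervalIntegrable_const (μ := volume))
    fun t ht => hφ ht.2

section Damping

variable {g : ℝ → ℝ} {t : ℝ}

noncomputable def runningSup (g : ℝ → ℝ) (t : ℝ) : ℝ :=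
  sSup (g '' Icc (min t 1) 1)

lemma bddAbove_image_Icc_min_one (hg : ContinuousOn g (Ioi 0)) (ht : 0 < t) :
    BddAbove (g '' Icc (min t 1) 1) :=
  isCompact_Icc.bddAbove_image <| hg.mono fun _ hs => (lt_min ht one_pos).trans_le hs.1

lemma runningSup_antitoneOn (hg : ContinuousOn g (Ioi 0)) : AntitoneOn (runningSup g) (Ioi 0) :=
  fun _ hs _ _ hst => csSup_le_csSup (bddAbove_image_Icc_min_one hg hs)
    ⟨g 1, mem_image_of_mem g ⟨min_le_right _ _, le_rfl⟩⟩
    (image_mono (Icc_subset_Icc_left (min_le_min_right 1 hst)))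

lemma le_runningSup (hg : ContinuousOn g (Ioi 0)) (ht : t ∈ Ioc 0 1) : g t ≤ runningSup g t :=
  le_csSup (bddAbove_image_Icc_min_one hg ht.1) (mem_image_of_mem g ⟨min_le_left _ _, ht.2⟩)

noncomputable def damping (g : ℝ → ℝ) (t : ℝ) : ℝ :=
  if t ≤ 0 then 0 else (1 + max (runningSup g t) 0)⁻¹

lemma damping_pos (ht : 0 < t) : 0 < damping g t := by
  rw [damping, if_neg ht.not_ge]
  positivity

lemma damping_nonneg : 0 ≤ damping g t := by
  unfold damping
  split_ifs
  exacts [le_rfl, by positivity]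

lemma monotone_damping (hg : ContinuousOn g (Ioi 0)) : Monotone (damping g) := by
  intro s t hst
  rcases le_or_gt s 0 with hs | hs
  · rw [damping, if_pos hs]
    exact damping_nonneg
  · rw [damping, damping, if_neg hs.not_ge, if_neg (hs.trans_le hst).not_ge]
    gcongr
    exact runningSup_antitoneOn hg hs (hs.trans_le hst) hst

lemma mul_damping_le_one (hg : ContinuousOn g (Ioi 0)) (ht : t ∈ Ioc 0 1) :
    g t * damping g t ≤ 1 := by
  rw [damping, if_neg ht.1.not_ge, ← div_eq_mul_inv, div_le_one (by positivity)]
  linarith [le_runningSup hg ht, le_max_left (runningSup g t) 0]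

lemma mul_integral_damping_le (hg : ContinuousOn g (Ioi 0)) (hg0 : ∀ x > 0, 0 ≤ g x)
    {x : ℝ} (hx : x ∈ Ioc 0 1) : g x * ∫ t in 0..x, damping g t ≤ x :=
  calc g x * ∫ t in 0..x, damping g t
      ≤ g x * (x * damping g x) := by
        gcongr
        · exact hg0 x hx.1
        · simpa using (monotone_damping hg).intervalIntegral_le_sub_mul hx.1.le
    _ = x * (g x * damping g x) := by ring
    _ ≤ x := mul_le_of_le_one_right hx.1.le (mul_damping_le_one hg hx)

lemma tendsto_mul_integral_damping (hg : ContinuousOn g (Ioi 0)) (hg0 : ∀ x > 0, 0 ≤ g x) :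
    Tendsto (fun x => g x * ∫ t in 0..x, damping g t) (𝓝[>] 0) (𝓝 0) := by
  have hx : ∀ᶠ x in 𝓝[>] (0 : ℝ), x ∈ Ioc 0 1 := Ioc_mem_nhdsGT one_pos
  refine tendsto_of_tendsto_of_tendsto_of_le_of_le' tendsto_const_nhds
    (tendsto_nhdsWithin_of_tendsto_nhds tendsto_id) ?_ ?_
  · filter_upwards [hx] with x hx
    exact mul_nonneg (hg0 x hx.1) (integral_nonneg hx.1.le fun _ _ => damping_nonneg)
  · filter_upwards [hx] with x hx
    exact mul_integral_damping_le hg hg0 hx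

end Damping

theorem stmt_12 (g : ℝ → ℝ) (hg : ContinuousOn g (Ioi (0:ℝ)))
    (hg0 : ∀ x > (0:ℝ), 0 ≤ g x) :
    ∃ h : ℝ → ℝ, ContinuousOn h (Ici (0:ℝ)) ∧ MonotoneOn h (Ici (0:ℝ)) ∧
      (∀ x ∈ Ici (0:ℝ), 0 ≤ h x) ∧ (∀ x > (0:ℝ), 0 < h x) ∧
      ∃ G : ℝ → ℝ, ContinuousOn G (Ici (0:ℝ)) ∧ ∀ x > (0:ℝ), G x = g x * h x := by
  set h : ℝ → ℝ := fun x => ∫ t in 0..x, damping g t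
  have hφ := monotone_damping hg
  have h_cont : Continuous h := continuous_primitive (fun _ _ => hφ.intervalIntegrable) 0
  refine ⟨h, h_cont.continuousOn, ?_, fun x hx => integral_nonneg hx fun _ _ => damping_nonneg,
    fun x hx => intervalIntegral_pos_of_pos_on hφ.intervalIntegrable
      (fun t ht => damping_pos ht.1) hx,
    Function.update (fun x => g x * h x) 0 0, ?_, fun x hx => Function.update_of_ne hx.ne' ..⟩
  · exact fun x hx y _ hxy => integral_mono_interval le_rfl hx hxy
      (ae_restrict_of_forall_mem measurableSet_Ioc fun _ _ => damping_nonneg)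
      hφ.intervalIntegrable
  · rw [continuousOn_update_iff, Ici_sdiff_left]
    exact ⟨hg.mul h_cont.continuousOn, fun _ => tendsto_mul_integral_damping hg hg0⟩
end

section
/- For 1/2 < η < 1, if F : [0,1] → ℝ is continuous and nonnegative, then the function x(t) = ∫₀¹ G(t,s)F(s) ds satisfies x(t) ≥ q(t)·max_{u∈[0,1]} x(u) for all t ∈ [0,1], where q(t) = ηt on [0,η] and q(t) = 2ηt − t² on [η,1], and G is the piecewise Green's function. -/
open Set

section aux

variable {η t s : ℝ}

lemma hq0 (hη1 : 1/2 < η) (hη2 : η < 1) (ht : t ∈ Icc (0:ℝ) 1) : 0 ≤ q η t := by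
  obtain ⟨h1, h2⟩ := ht
  unfold q; split_ifs <;> nlinarith

lemma hJnn (hη1 : 1/2 < η) (hs : s ∈ Icc (0:ℝ) 1) : 0 ≤ J η s := by
  obtain ⟨h1, h2⟩ := hs
  unfold J; split_ifs <;> nlinarith

lemma hJub (hη1 : 1/2 < η) (hη2 : η < 1) (hs : s ∈ Icc (0:ℝ) 1) : J η s ≤ 1/2 := by
  obtain ⟨h1, h2⟩ := hs
  unfold J; split_ifs <;> nlinarith

lemma hGnn (hη1 : 1/2 < η) (hη2 : η < 1) (ht : t ∈ Icc (0:ℝ) 1) (hs : s ∈ Icc (0:ℝ) 1) :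
    0 ≤ G η t s := by
  obtain ⟨h1, h2⟩ := ht; obtain ⟨h3, h4⟩ := hs
  unfold G; split_ifs <;> nlinarith

lemma hGJ (hη1 : 1/2 < η) (hη2 : η < 1) (ht : t ∈ Icc (0:ℝ) 1) (hs : s ∈ Icc (0:ℝ) 1) :
    G η t s ≤ J η s := by
  obtain ⟨h1, h2⟩ := ht; obtain ⟨h3, h4⟩ := hs
  unfold G J; split_ifs <;> nlinarith [sq_nonneg (η - t), sq_nonneg (s - t)]

lemma hqJG (hη1 : 1/2 < η) (hη2 : η < 1) (ht : t ∈ Icc (0:ℝ) 1) (hs : s ∈ Icc (0:ℝ) 1) :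
    q η t * J η s ≤ G η t s := by
  obtain ⟨h1, h2⟩ := ht; obtain ⟨h3, h4⟩ := hs
  have hη0 : (0:ℝ) < η := by linarith
  have hsq : η ^ 2 ≤ 1 := by nlinarith
  have hηs : η * s ≤ 1 := by nlinarith
  have hηta : η * t ≤ 1 := by nlinarith
  have hηt : 0 ≤ η * t := by positivity
  have hq1b : 2 * η * t - t ^ 2 ≤ 1 := by nlinarith [sq_nonneg (η - t)]
  have h20 : 0 ≤ t * (2 * η - t) := mul_nonneg h1 (by linarith)
  unfold q G J
  rcases le_or_gt t η with h5 | h5 <;> rcases le_or_gt s η with h6 | h6 <;>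
    rcases le_or_gt t s with h7 | h7
  · rw [if_pos h5, if_pos h6, if_pos h6, if_pos h7]
    nlinarith [mul_nonneg h1 h3, hηs, mul_nonneg h1 (sub_nonneg.2 h7)]
  · rw [if_pos h5, if_pos h6, if_pos h6, if_neg (not_le.2 h7)]
    nlinarith [sq_nonneg s, hηta]
  · rw [if_pos h5, if_neg (not_le.2 h6), if_neg (not_le.2 h6), if_pos h7]
    nlinarith [hηt, hsq, mul_nonneg h1 (sub_nonneg.2 h5)]
  · linarith
  · linarith
  · rw [if_neg (not_le.2 h5), if_pos h6, if_pos h6, if_neg (not_le.2 h7)]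
    nlinarith [sq_nonneg s, hq1b]
  · rw [if_neg (not_le.2 h5), if_neg (not_le.2 h6), if_neg (not_le.2 h6), if_pos h7]
    nlinarith [h20, hsq]
  · rw [if_neg (not_le.2 h5), if_neg (not_le.2 h6), if_neg (not_le.2 h6), if_neg (not_le.2 h7)]
    nlinarith [h20, hsq, sq_nonneg (s - t)]

lemma measG (η t : ℝ) : Measurable fun s => G η t s := by
  unfold G
  apply Measurable.ite (measurableSet_le measurable_id measurable_const)
  · exact Measurable.ite (measurableSet_le measurable_const measurable_id)
      (by fun_prop) (by fun_prop)
  · exact Measurable.ite (measurableSet_le measurable_const measurable_id)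
      (by fun_prop) (by fun_prop)

lemma measJ (η : ℝ) : Measurable fun s => J η s := by
  unfold J
  exact Measurable.ite (measurableSet_le measurable_id measurable_const)
    (by fun_prop) (by fun_prop)

end aux

theorem stmt_15 (η : ℝ) (hη : 1/2 < η ∧ η < 1)
    (F : ℝ → ℝ) (hF : ContinuousOn F (Icc (0:ℝ) 1)) (hF0 : ∀ s ∈ Icc (0:ℝ) 1, 0 ≤ F s)
    (x : ℝ → ℝ) (hx : ∀ t, x t = ∫ s in (0:ℝ)..1, G η t s * F s) :
    ∀ t ∈ Icc (0:ℝ) 1, x t ≥ q η t * sSup (x '' Icc (0:ℝ) 1) := by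
  obtain ⟨hη1, hη2⟩ := hη
  have hFint : MeasureTheory.IntegrableOn F (Icc (0:ℝ) 1) := hF.integrableOn_Icc
  have hFm : MeasureTheory.AEStronglyMeasurable F
      (MeasureTheory.volume.restrict (Icc (0:ℝ) 1)) :=
    hF.aestronglyMeasurable measurableSet_Icc
  have hFhalf : MeasureTheory.IntegrableOn (fun s => 1/2 * F s) (Icc (0:ℝ) 1) :=
    hFint.const_mul _
  -- integrability of G t · * F
  have intGF : ∀ t0 ∈ Icc (0:ℝ) 1,
      MeasureTheory.IntegrableOn (fun s => G η t0 s * F s) (Icc (0:ℝ) 1) := by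
    intro t0 ht0
    apply hFhalf.mono' (((measG η t0).aestronglyMeasurable).mul hFm)
    rw [MeasureTheory.ae_restrict_iff' measurableSet_Icc]
    refine MeasureTheory.ae_of_all _ fun s hs => ?_
    simp only [Pi.mul_apply]
    rw [Real.norm_eq_abs, abs_of_nonneg (mul_nonneg (hGnn hη1 hη2 ht0 hs) (hF0 s hs))]
    exact mul_le_mul_of_nonneg_right
      (le_trans (hGJ hη1 hη2 ht0 hs) (hJub hη1 hη2 hs)) (hF0 s hs)
  have intJF : MeasureTheory.IntegrableOn (fun s => J η s * F s) (Icc (0:ℝ) 1) := by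
    apply hFhalf.mono' (((measJ η).aestronglyMeasurable).mul hFm)
    rw [MeasureTheory.ae_restrict_iff' measurableSet_Icc]
    refine MeasureTheory.ae_of_all _ fun s hs => ?_
    simp only [Pi.mul_apply]
    rw [Real.norm_eq_abs, abs_of_nonneg (mul_nonneg (hJnn hη1 hs) (hF0 s hs))]
    exact mul_le_mul_of_nonneg_right (hJub hη1 hη2 hs) (hF0 s hs)
  have uicc : uIcc (0:ℝ) 1 = Icc (0:ℝ) 1 := uIcc_of_le zero_le_one
  have iiGF : ∀ t ∈ Icc (0:ℝ) 1, IntervalIntegrable (fun s => G η t s * F s)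
      MeasureTheory.volume 0 1 := fun t ht =>
    MeasureTheory.IntegrableOn.intervalIntegrable (by rw [uicc]; exact intGF t ht)
  have iiJF : IntervalIntegrable (fun s => J η s * F s) MeasureTheory.volume 0 1 :=
    MeasureTheory.IntegrableOn.intervalIntegrable (by rw [uicc]; exact intJF)
  set C : ℝ := ∫ s in (0:ℝ)..1, J η s * F s with hC
  have hxle : ∀ u ∈ Icc (0:ℝ) 1, x u ≤ C := by
    intro u hu
    rw [hx u]
    exact intervalIntegral.integral_mono_on zero_le_one (iiGF u hu) iiJF
      (fun s hs => mul_le_mul_of_nonneg_right (hGJ hη1 hη2 hu hs) (hF0 s hs))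
  have hC0 : 0 ≤ C :=
    intervalIntegral.integral_nonneg zero_le_one
      (fun s hs => mul_nonneg (hJnn hη1 hs) (hF0 s hs))
  have hsup : sSup (x '' Icc (0:ℝ) 1) ≤ C := by
    apply Real.sSup_le _ hC0
    rintro y ⟨u, hu, rfl⟩
    exact hxle u hu
  intro t ht
  have hlow : q η t * C ≤ x t := by
    rw [hx t, hC, ← intervalIntegral.integral_const_mul]
    apply intervalIntegral.integral_mono_on zero_le_one
      (iiJF.const_mul _) (iiGF t ht)
    intro s hs
    calc q η t * (J η s * F s) = (q η t * J η s) * F s := by ring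
      _ ≤ G η t s * F s := mul_le_mul_of_nonneg_right (hqJG hη1 hη2 ht hs) (hF0 s hs)
  calc q η t * sSup (x '' Icc (0:ℝ) 1) ≤ q η t * C :=
        mul_le_mul_of_nonneg_left hsup (hq0 hη1 hη2 ht)
    _ ≤ x t := hlow
end
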